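/- arXiv:2309.11699 — 2 statements merged into one kernel-verified Lean document; each statement's English description precedes it below -/
import Mathlib

section
/- Let T > 0, δ > 0, C > 0, and let a : [0,T] × ℝ² → ℝ be smooth with ‖∂_x^α ∂_y^β a(t,·,·)‖_{L^∞(ℝ²)} ≤ C^{α+β+1} α! β! for all α, β ∈ ℕ and t ∈ [0,T]. With H = (t^{δ+1}/(δ+1)) ∂_x + t^δ ∂_y, for every k ≥ 1, ‖H^k a‖_{L^∞([0,T]×ℝ²)} ≤ (8C(T+1)^{δ+1})^{k+1} (k−2)!, where by convention (−1)! = 1 and 0! = 1. -/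
noncomputable def px (u : ℝ → ℝ → ℝ → ℝ) : ℝ → ℝ → ℝ → ℝ :=
  fun t x y => deriv (fun x' => u t x' y) x

noncomputable def py (u : ℝ → ℝ → ℝ → ℝ) : ℝ → ℝ → ℝ → ℝ :=
  fun t x y => deriv (fun y' => u t x y') y

/-- The auxiliary vector field `H = (t^{δ+1}/(δ+1)) ∂_x + t^δ ∂_y`. -/
noncomputable def Hop (δ : ℝ) (u : ℝ → ℝ → ℝ → ℝ) : ℝ → ℝ → ℝ → ℝ :=
  fun t x y => t ^ (δ + 1) / (δ + 1) * px u t x y + t ^ δ * py u t x y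


open Function

noncomputable def Dv (v : ℝ×ℝ×ℝ) (F : ℝ×ℝ×ℝ → ℝ) : ℝ×ℝ×ℝ → ℝ := fun p => fderiv ℝ F p v

noncomputable def curry3 (F : ℝ×ℝ×ℝ → ℝ) : ℝ → ℝ → ℝ → ℝ := fun t x y => F (t,x,y)

lemma Dv_contDiff {F : ℝ×ℝ×ℝ → ℝ} (hF : ContDiff ℝ (⊤:ℕ∞) F) (v : ℝ×ℝ×ℝ) :
    ContDiff ℝ (⊤:ℕ∞) (Dv v F) := by
  exact (hF.fderiv_right (m := (⊤:ℕ∞)) (by exact_mod_cast le_rfl)).clm_apply contDiff_const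

lemma Dv_iter_contDiff {F : ℝ×ℝ×ℝ → ℝ} (hF : ContDiff ℝ (⊤:ℕ∞) F) (v : ℝ×ℝ×ℝ) (n : ℕ) :
    ContDiff ℝ (⊤:ℕ∞) ((Dv v)^[n] F) := by
  induction n with
  | zero => exact hF
  | succ n ih => rw [iterate_succ_apply']; exact Dv_contDiff ih v

lemma Dv_swap {F : ℝ×ℝ×ℝ → ℝ} (hF : ContDiff ℝ (⊤:ℕ∞) F) (v w : ℝ×ℝ×ℝ) :
    Dv v (Dv w F) = Dv w (Dv v F) := by
  funext p
  have hd : ∀ u : ℝ×ℝ×ℝ, Dv u F = fun q => (ContinuousLinearMap.apply ℝ ℝ u) (fderiv ℝ F q) := by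
    intro u; rfl
  have hF' : ContDiff ℝ (⊤:ℕ∞) (fderiv ℝ F) :=
    hF.fderiv_right (m := (⊤:ℕ∞)) (by exact_mod_cast le_rfl)
  have key : ∀ u u' : ℝ×ℝ×ℝ, Dv u (Dv u' F) p = fderiv ℝ (fderiv ℝ F) p u u' := by
    intro u u'
    have h1 : HasFDerivAt (fderiv ℝ F) (fderiv ℝ (fderiv ℝ F) p) p :=
      (hF'.differentiable (by simp)).differentiableAt.hasFDerivAt
    have h2 := (ContinuousLinearMap.apply ℝ ℝ u').hasFDerivAt.comp p h1
    rw [hd u']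
    show fderiv ℝ ((ContinuousLinearMap.apply ℝ ℝ u') ∘ (fderiv ℝ F)) p u = _
    rw [h2.fderiv]
    rfl
  rw [key v w, key w v]
  have hsym : IsSymmSndFDerivAt ℝ F p := hF.contDiffAt.isSymmSndFDerivAt (by
    have h22 : ((2:ℕ∞) : WithTop ℕ∞) ≤ ((⊤:ℕ∞) : WithTop ℕ∞) := WithTop.coe_le_coe.2 le_top
    simpa using h22)
  exact hsym v w

def e2 : ℝ×ℝ×ℝ := (0,1,0)
def e3 : ℝ×ℝ×ℝ := (0,0,1)

lemma hasDerivAt_sliceX {F : ℝ×ℝ×ℝ → ℝ} {t x y : ℝ} (hF : DifferentiableAt ℝ F (t,x,y)) :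
    HasDerivAt (fun x' => F (t,x',y)) (Dv e2 F (t,x,y)) x := by
  have h : HasDerivAt (fun x' : ℝ => ((t:ℝ),(x':ℝ),(y:ℝ))) e2 x :=
    HasDerivAt.prodMk (hasDerivAt_const x t) (HasDerivAt.prodMk (hasDerivAt_id x) (hasDerivAt_const x y))
  exact hF.hasFDerivAt.comp_hasDerivAt x h

lemma hasDerivAt_sliceY {F : ℝ×ℝ×ℝ → ℝ} {t x y : ℝ} (hF : DifferentiableAt ℝ F (t,x,y)) :
    HasDerivAt (fun y' => F (t,x,y')) (Dv e3 F (t,x,y)) y := by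
  have h : HasDerivAt (fun y' : ℝ => ((t:ℝ),(x:ℝ),(y':ℝ))) e3 y :=
    HasDerivAt.prodMk (hasDerivAt_const y t) (HasDerivAt.prodMk (hasDerivAt_const y x) (hasDerivAt_id y))
  exact hF.hasFDerivAt.comp_hasDerivAt y h

lemma px_curry {F : ℝ×ℝ×ℝ → ℝ} (hF : ContDiff ℝ (⊤:ℕ∞) F) :
    px (curry3 F) = curry3 (Dv e2 F) := by
  funext t x y
  exact (hasDerivAt_sliceX ((hF.differentiable (by simp)).differentiableAt)).deriv

lemma py_curry {F : ℝ×ℝ×ℝ → ℝ} (hF : ContDiff ℝ (⊤:ℕ∞) F) :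
    py (curry3 F) = curry3 (Dv e3 F) := by
  funext t x y
  exact (hasDerivAt_sliceY ((hF.differentiable (by simp)).differentiableAt)).deriv

lemma px_iter_curry {F : ℝ×ℝ×ℝ → ℝ} (hF : ContDiff ℝ (⊤:ℕ∞) F) (n : ℕ) :
    px^[n] (curry3 F) = curry3 ((Dv e2)^[n] F) := by
  induction n with
  | zero => rfl
  | succ n ih =>
    rw [iterate_succ_apply', ih, px_curry (Dv_iter_contDiff hF e2 n)]
    exact congrArg curry3 (Function.iterate_succ_apply' (Dv e2) n F).symm

lemma py_iter_curry {F : ℝ×ℝ×ℝ → ℝ} (hF : ContDiff ℝ (⊤:ℕ∞) F) (n : ℕ) :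
    py^[n] (curry3 F) = curry3 ((Dv e3)^[n] F) := by
  induction n with
  | zero => rfl
  | succ n ih =>
    rw [iterate_succ_apply', ih, py_curry (Dv_iter_contDiff hF e3 n)]
    exact congrArg curry3 (Function.iterate_succ_apply' (Dv e3) n F).symm

lemma Dv_swap_iter {F : ℝ×ℝ×ℝ → ℝ} (hF : ContDiff ℝ (⊤:ℕ∞) F) (j : ℕ) :
    Dv e3 ((Dv e2)^[j] F) = (Dv e2)^[j] (Dv e3 F) := by
  induction j with
  | zero => rfl
  | succ j ih =>
    rw [iterate_succ_apply', Dv_swap (Dv_iter_contDiff hF e2 j) e3 e2, ih]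
    exact (Function.iterate_succ_apply' (Dv e2) j (Dv e3 F)).symm

open Finset in
lemma binom_step (A B : ℝ) (u : ℕ → ℕ → ℝ) (k : ℕ) :
    A * (∑ j ∈ range (k+1), (k.choose j : ℝ) * A^j * B^(k-j) * u (j+1) (k-j))
      + B * (∑ j ∈ range (k+1), (k.choose j : ℝ) * A^j * B^(k-j) * u j (k-j+1))
    = ∑ j ∈ range (k+2), ((k+1).choose j : ℝ) * A^j * B^(k+1-j) * u j (k+1-j) := by
  rw [Finset.sum_range_succ'
    (fun j => ((k+1).choose j : ℝ) * A^j * B^(k+1-j) * u j (k+1-j)) (k+1)]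
  have e1 : ∀ j ∈ range (k+1),
      ((k+1).choose (j+1) : ℝ) * A^(j+1) * B^(k+1-(j+1)) * u (j+1) (k+1-(j+1))
      = (k.choose j : ℝ) * A^(j+1) * B^(k-j) * u (j+1) (k-j)
        + (k.choose (j+1) : ℝ) * A^(j+1) * B^(k-j) * u (j+1) (k-j) := by
    intro j hj
    have h : k+1-(j+1) = k-j := Nat.succ_sub_succ k j
    rw [h, Nat.choose_succ_succ]
    push_cast; ring
  rw [Finset.sum_congr rfl e1, Finset.sum_add_distrib]
  have e2 : A * (∑ j ∈ range (k+1), (k.choose j : ℝ) * A^j * B^(k-j) * u (j+1) (k-j))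
      = ∑ j ∈ range (k+1), (k.choose j : ℝ) * A^(j+1) * B^(k-j) * u (j+1) (k-j) := by
    rw [Finset.mul_sum]; exact Finset.sum_congr rfl (fun j _ => by ring)
  have e3 : B * (∑ j ∈ range (k+1), (k.choose j : ℝ) * A^j * B^(k-j) * u j (k-j+1))
      = (∑ j ∈ range (k+1), (k.choose (j+1) : ℝ) * A^(j+1) * B^(k-j) * u (j+1) (k-j))
        + ((k+1).choose 0 : ℝ) * A^0 * B^(k+1-0) * u 0 (k+1-0) := by
    rw [Finset.mul_sum,
      Finset.sum_range_succ'
        (fun j => B * ((k.choose j : ℝ) * A^j * B^(k-j) * u j (k-j+1))) k,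
      Finset.sum_range_succ
        (fun j => (k.choose (j+1) : ℝ) * A^(j+1) * B^(k-j) * u (j+1) (k-j)) k]
    have hz : (k.choose (k+1) : ℝ) = 0 := by
      simp [Nat.choose_eq_zero_of_lt]
    rw [hz]
    have e4 : ∀ j ∈ range k,
        B * ((k.choose (j+1) : ℝ) * A^(j+1) * B^(k-(j+1)) * u (j+1) (k-(j+1)+1))
        = (k.choose (j+1) : ℝ) * A^(j+1) * B^(k-j) * u (j+1) (k-j) := by
      intro j hj
      rw [Finset.mem_range] at hj
      have h1 : k-(j+1)+1 = k-j := by omega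
      have h2 : B^(k-j) = B * B^(k-(j+1)) := by
        rw [← pow_succ']
        congr 1
        omega
      rw [h1, h2]; ring
    rw [Finset.sum_congr rfl e4]
    simp
    ring
  rw [e2, e3]
  ring

lemma Hop_iter_formula (δ : ℝ) {F : ℝ×ℝ×ℝ → ℝ} (hF : ContDiff ℝ (⊤:ℕ∞) F) (k : ℕ) :
    (Hop δ)^[k] (curry3 F) = fun t x y => ∑ j ∈ Finset.range (k+1),
      (k.choose j : ℝ) * (t^(δ+1)/(δ+1))^j * (t^δ)^(k-j)
        * ((Dv e2)^[j] ((Dv e3)^[k-j] F)) (t,x,y) := by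
  have hG : ∀ j m : ℕ, ContDiff ℝ (⊤:ℕ∞) ((Dv e2)^[j] ((Dv e3)^[m] F)) :=
    fun j m => Dv_iter_contDiff (Dv_iter_contDiff hF e3 m) e2 j
  induction k with
  | zero => funext t x y; simp [curry3]
  | succ k ih =>
    rw [iterate_succ_apply', ih]
    funext t x y
    have hder1 : HasDerivAt
        (fun x' => ∑ j ∈ Finset.range (k+1),
          (k.choose j : ℝ) * (t^(δ+1)/(δ+1))^j * (t^δ)^(k-j)
            * ((Dv e2)^[j] ((Dv e3)^[k-j] F)) (t,x',y))
        (∑ j ∈ Finset.range (k+1),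
          (k.choose j : ℝ) * (t^(δ+1)/(δ+1))^j * (t^δ)^(k-j)
            * Dv e2 ((Dv e2)^[j] ((Dv e3)^[k-j] F)) (t,x,y)) x :=
      HasDerivAt.fun_sum (fun j _ =>
        (hasDerivAt_sliceX (((hG j (k-j)).differentiable
          (by simp)).differentiableAt)).const_mul _)
    have hder2 : HasDerivAt
        (fun y' => ∑ j ∈ Finset.range (k+1),
          (k.choose j : ℝ) * (t^(δ+1)/(δ+1))^j * (t^δ)^(k-j)
            * ((Dv e2)^[j] ((Dv e3)^[k-j] F)) (t,x,y'))
        (∑ j ∈ Finset.range (k+1),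
          (k.choose j : ℝ) * (t^(δ+1)/(δ+1))^j * (t^δ)^(k-j)
            * Dv e3 ((Dv e2)^[j] ((Dv e3)^[k-j] F)) (t,x,y)) y :=
      HasDerivAt.fun_sum (fun j _ =>
        (hasDerivAt_sliceY (((hG j (k-j)).differentiable
          (by simp)).differentiableAt)).const_mul _)
    show t ^ (δ + 1) / (δ + 1) * px _ t x y + t ^ δ * py _ t x y = _
    have hpx : px (fun t x y => ∑ j ∈ Finset.range (k+1),
          (k.choose j : ℝ) * (t^(δ+1)/(δ+1))^j * (t^δ)^(k-j)
            * ((Dv e2)^[j] ((Dv e3)^[k-j] F)) (t,x,y)) t x y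
        = ∑ j ∈ Finset.range (k+1),
          (k.choose j : ℝ) * (t^(δ+1)/(δ+1))^j * (t^δ)^(k-j)
            * ((Dv e2)^[j+1] ((Dv e3)^[k-j] F)) (t,x,y) := by
      rw [show px (fun t x y => ∑ j ∈ Finset.range (k+1),
          (k.choose j : ℝ) * (t^(δ+1)/(δ+1))^j * (t^δ)^(k-j)
            * ((Dv e2)^[j] ((Dv e3)^[k-j] F)) (t,x,y)) t x y = _ from hder1.deriv]
      refine Finset.sum_congr rfl (fun j _ => ?_)
      rw [← Function.iterate_succ_apply' (Dv e2) j ((Dv e3)^[k-j] F)]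
    have hpy : py (fun t x y => ∑ j ∈ Finset.range (k+1),
          (k.choose j : ℝ) * (t^(δ+1)/(δ+1))^j * (t^δ)^(k-j)
            * ((Dv e2)^[j] ((Dv e3)^[k-j] F)) (t,x,y)) t x y
        = ∑ j ∈ Finset.range (k+1),
          (k.choose j : ℝ) * (t^(δ+1)/(δ+1))^j * (t^δ)^(k-j)
            * ((Dv e2)^[j] ((Dv e3)^[k-j+1] F)) (t,x,y) := by
      rw [show py (fun t x y => ∑ j ∈ Finset.range (k+1),
          (k.choose j : ℝ) * (t^(δ+1)/(δ+1))^j * (t^δ)^(k-j)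
            * ((Dv e2)^[j] ((Dv e3)^[k-j] F)) (t,x,y)) t x y = _ from hder2.deriv]
      refine Finset.sum_congr rfl (fun j _ => ?_)
      rw [Dv_swap_iter (Dv_iter_contDiff hF e3 (k-j)) j,
        ← Function.iterate_succ_apply' (Dv e3) (k-j) F]
    rw [hpx, hpy]
    exact binom_step (t^(δ+1)/(δ+1)) (t^δ)
      (fun j m => ((Dv e2)^[j] ((Dv e3)^[m] F)) (t,x,y)) k

lemma nat_fact_bound (k : ℕ) (hk : 1 ≤ k) :
    (k+1) * k.factorial ≤ 8^(k+1) * (k-2).factorial := by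
  match k, hk with
  | 1, _ => norm_num [Nat.factorial]
  | (n+2), _ =>
    have h2 : n+2-2 = n := by omega
    have h1 : (n+2+1) * (n+2).factorial = ((n+3)*(n+2)*(n+1)) * n.factorial := by
      simp [Nat.factorial]; ring
    rw [h1, h2]
    have h3 : (n+3)*(n+2)*(n+1) ≤ 8^(n+2+1) := by
      calc (n+3)*(n+2)*(n+1) ≤ (n+3)*(n+3)*(n+3) := by
            exact Nat.mul_le_mul (Nat.mul_le_mul le_rfl (by omega)) (by omega)
        _ = (n+3)^3 := by ring
        _ ≤ (2^(n+3))^3 := Nat.pow_le_pow_left (Nat.lt_two_pow_self (n := n+3)).le 3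
        _ = 8^(n+3) := by
            rw [← pow_mul, Nat.mul_comm, pow_mul]
            norm_num
    exact Nat.mul_le_mul h3 le_rfl

/-- Bound on `H^k a`: `‖H^k a‖_{L^∞} ≤ (8C(T+1)^{δ+1})^{k+1} (k-2)!`,
with the convention `(-1)! = 0! = 1` (realized by truncated subtraction `k - 2` in `ℕ`). -/
theorem Hk_a_bound (T δ C : ℝ) (hT : 0 < T) (hδ : 0 < δ) (hC : 0 < C)
    (a : ℝ → ℝ → ℝ → ℝ)
    (ha : ContDiff ℝ (⊤ : ℕ∞) (fun p : ℝ × ℝ × ℝ => a p.1 p.2.1 p.2.2))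
    (hbd : ∀ α β : ℕ, ∀ t ∈ Set.Icc (0 : ℝ) T, ∀ x y : ℝ,
      |(px^[α] (py^[β] a)) t x y| ≤ C ^ (α + β + 1) * (Nat.factorial α) * (Nat.factorial β))
    (k : ℕ) (hk : 1 ≤ k) :
    ∀ t ∈ Set.Icc (0 : ℝ) T, ∀ x y : ℝ,
      |((Hop δ)^[k] a) t x y|
        ≤ (8 * C * (T + 1) ^ (δ + 1)) ^ (k + 1) * (Nat.factorial (k - 2)) := by
  intro t ht x y
  obtain ⟨ht0, htT⟩ := ht
  set F : ℝ×ℝ×ℝ → ℝ := fun p => a p.1 p.2.1 p.2.2 with hFdef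
  have hF : ContDiff ℝ (⊤:ℕ∞) F := ha.of_le (by simp)
  have hcurry : a = curry3 F := rfl
  set M : ℝ := (T + 1) ^ (δ + 1) with hMdef
  have hM1 : 1 ≤ M := by
    rw [hMdef]
    calc (1:ℝ) = (1:ℝ) ^ (δ+1) := (Real.one_rpow _).symm
      _ ≤ (T+1) ^ (δ+1) := Real.rpow_le_rpow (by norm_num) (by linarith) (by linarith)
  have hM0 : 0 ≤ M := by linarith
  have htA : |t ^ (δ+1) / (δ+1)| ≤ M := by
    have h0 : (0:ℝ) ≤ t ^ (δ+1) := Real.rpow_nonneg ht0 _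
    have h1 : t ^ (δ+1) / (δ+1) ≤ t ^ (δ+1) := div_le_self h0 (by linarith)
    have h2 : t ^ (δ+1) ≤ (T+1) ^ (δ+1) :=
      Real.rpow_le_rpow ht0 (by linarith) (by linarith)
    rw [abs_of_nonneg (div_nonneg h0 (by linarith))]
    linarith
  have htB : |t ^ δ| ≤ M := by
    have h0 : (0:ℝ) ≤ t ^ δ := Real.rpow_nonneg ht0 _
    have h2 : t ^ δ ≤ (T+1) ^ δ := Real.rpow_le_rpow ht0 (by linarith) (by linarith)
    have h3 : (T+1) ^ δ ≤ (T+1) ^ (δ+1) :=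
      Real.rpow_le_rpow_of_exponent_le (by linarith) (by linarith)
    rw [abs_of_nonneg h0]
    linarith
  have hval : ∀ j m : ℕ,
      |((Dv e2)^[j] ((Dv e3)^[m] F)) (t,x,y)| ≤ C ^ (j + m + 1) * (j.factorial) * (m.factorial) := by
    intro j m
    have heq : (px^[j] (py^[m] a)) t x y = ((Dv e2)^[j] ((Dv e3)^[m] F)) (t,x,y) := by
      rw [hcurry, py_iter_curry hF m, px_iter_curry (Dv_iter_contDiff hF e3 m) j]
      rfl
    rw [← heq]
    exact hbd j m t ⟨ht0, htT⟩ x y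
  rw [hcurry, Hop_iter_formula δ hF k]
  have hterm : ∀ j ∈ Finset.range (k+1),
      |(k.choose j : ℝ) * (t^(δ+1)/(δ+1))^j * (t^δ)^(k-j)
        * ((Dv e2)^[j] ((Dv e3)^[k-j] F)) (t,x,y)|
      ≤ C^(k+1) * M^k * (k.factorial : ℝ) := by
    intro j hj
    rw [Finset.mem_range] at hj
    have hjk : j ≤ k := by omega
    have habs : |(k.choose j : ℝ) * (t^(δ+1)/(δ+1))^j * (t^δ)^(k-j)
        * ((Dv e2)^[j] ((Dv e3)^[k-j] F)) (t,x,y)|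
        = (k.choose j : ℝ) * |t^(δ+1)/(δ+1)|^j * |t^δ|^(k-j)
          * |((Dv e2)^[j] ((Dv e3)^[k-j] F)) (t,x,y)| := by
      rw [abs_mul, abs_mul, abs_mul, abs_pow, abs_pow, Nat.abs_cast]
    rw [habs]
    have hle1 : (k.choose j : ℝ) * |t^(δ+1)/(δ+1)|^j * |t^δ|^(k-j)
          * |((Dv e2)^[j] ((Dv e3)^[k-j] F)) (t,x,y)|
        ≤ (k.choose j : ℝ) * M^j * M^(k-j)
          * (C ^ (j + (k-j) + 1) * (j.factorial) * ((k-j).factorial)) := by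
      gcongr
      exact hval j (k-j)
    refine hle1.trans (le_of_eq ?_)
    have e1 : j + (k-j) = k := by omega
    have e2 : M^j * M^(k-j) = M^k := by rw [← pow_add, e1]
    have e3 : (k.choose j : ℝ) * (j.factorial : ℝ) * ((k-j).factorial : ℝ)
        = (k.factorial : ℝ) := by
      exact_mod_cast congrArg (Nat.cast (R := ℝ))
        (Nat.choose_mul_factorial_mul_factorial hjk)
    calc (k.choose j : ℝ) * M^j * M^(k-j)
          * (C ^ (j + (k-j) + 1) * (j.factorial) * ((k-j).factorial))
        = C^(k+1) * (M^j * M^(k-j))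
          * ((k.choose j : ℝ) * (j.factorial) * ((k-j).factorial)) := by rw [e1]; ring
      _ = C^(k+1) * M^k * (k.factorial : ℝ) := by rw [e2, e3]
  have hsum : |∑ j ∈ Finset.range (k+1),
      (k.choose j : ℝ) * (t^(δ+1)/(δ+1))^j * (t^δ)^(k-j)
        * ((Dv e2)^[j] ((Dv e3)^[k-j] F)) (t,x,y)|
      ≤ (k+1 : ℝ) * (C^(k+1) * M^k * (k.factorial : ℝ)) := by
    calc |∑ j ∈ Finset.range (k+1), _| ≤ ∑ j ∈ Finset.range (k+1),
          |(k.choose j : ℝ) * (t^(δ+1)/(δ+1))^j * (t^δ)^(k-j)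
            * ((Dv e2)^[j] ((Dv e3)^[k-j] F)) (t,x,y)| := Finset.abs_sum_le_sum_abs _ _
      _ ≤ ∑ j ∈ Finset.range (k+1), C^(k+1) * M^k * (k.factorial : ℝ) :=
          Finset.sum_le_sum hterm
      _ = (k+1 : ℝ) * (C^(k+1) * M^k * (k.factorial : ℝ)) := by
          rw [Finset.sum_const, Finset.card_range, nsmul_eq_mul]; push_cast; ring
  refine hsum.trans ?_
  have hnat : ((k+1) * k.factorial : ℕ) ≤ (8^(k+1) * (k-2).factorial : ℕ) :=
    nat_fact_bound k hk
  have hnat' : ((k+1 : ℝ)) * (k.factorial : ℝ) ≤ 8^(k+1) * ((k-2).factorial : ℝ) := by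
    exact_mod_cast hnat
  have hMk : M^k ≤ M^(k+1) := pow_le_pow_right₀ hM1 (Nat.le_succ k)
  have hCpow : (0:ℝ) ≤ C^(k+1) := pow_nonneg hC.le _
  have hrhs : (8 * C * M) ^ (k+1) * ((k-2).factorial : ℝ)
      = (C^(k+1) * M^(k+1)) * (8^(k+1) * ((k-2).factorial : ℝ)) := by
    rw [mul_pow, mul_pow]; ring
  rw [hrhs]
  calc (k+1 : ℝ) * (C^(k+1) * M^k * (k.factorial : ℝ))
      = (C^(k+1) * M^k) * ((k+1 : ℝ) * (k.factorial : ℝ)) := by ring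
    _ ≤ (C^(k+1) * M^(k+1)) * (8^(k+1) * ((k-2).factorial : ℝ)) := by
        apply mul_le_mul
        · exact mul_le_mul_of_nonneg_left hMk hCpow
        · exact hnat'
        · positivity
        · positivity
end

section
/- Let u ∈ S(ℝ²) and m, n ∈ ℕ. Then ‖∂_x^m ∂_y^n u‖_{L²(ℝ²)} ≤ ‖∂_x^{2m} u‖_{L²(ℝ²)}^{1/2} · ‖∂_y^{2n} u‖_{L²(ℝ²)}^{1/2}. -/
open MeasureTheory

noncomputable def px2 (f : ℝ × ℝ → ℝ) : ℝ × ℝ → ℝ :=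
  fun p => deriv (fun x' => f (x', p.2)) p.1

noncomputable def py2 (f : ℝ × ℝ → ℝ) : ℝ × ℝ → ℝ :=
  fun p => deriv (fun y' => f (p.1, y')) p.2

/-!
Integrating by parts `m` times in `x` and `n` times in `y`, and using that partial derivatives
of a Schwartz function commute, gives
`‖∂_x^m ∂_y^n u‖₂² = (-1)^(m+n) ∫ ∂_x^{2m} u · ∂_y^{2n} u`.
The Cauchy–Schwarz inequality bounds the right-hand side by `‖∂_x^{2m} u‖₂ ‖∂_y^{2n} u‖₂`,
and taking square roots gives the claim.
-/

open scoped LineDeriv SchwartzMap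

theorem ENNReal.le_rpow_half_mul_rpow_half_of_sq_le {a b c : ENNReal} (h : a ^ 2 ≤ b * c) :
    a ≤ b ^ (1 / 2 : ℝ) * c ^ (1 / 2 : ℝ) := by
  rw [← ENNReal.mul_rpow_of_nonneg _ _ (by norm_num)]
  calc a = (a ^ 2) ^ (1 / 2 : ℝ) := by simpa using (ENNReal.pow_rpow_inv_natCast two_ne_zero a).symm
    _ ≤ (b * c) ^ (1 / 2 : ℝ) := ENNReal.rpow_le_rpow h (by norm_num)

namespace MeasureTheory

variable {α : Type*} [MeasurableSpace α] {μ : Measure α}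

theorem enorm_integral_mul_le_eLpNorm_two_mul_eLpNorm_two {𝕜 : Type*}
    [NormedRing 𝕜] [NormedSpace ℝ 𝕜] {f g : α → 𝕜}
    (hf : AEStronglyMeasurable f μ) (hg : AEStronglyMeasurable g μ) :
    ‖∫ x, f x * g x ∂μ‖ₑ ≤ eLpNorm f 2 μ * eLpNorm g 2 μ :=
  calc ‖∫ x, f x * g x ∂μ‖ₑ ≤ ∫⁻ x, ‖f x * g x‖ₑ ∂μ := enorm_integral_le_lintegral_enorm _
    _ = eLpNorm (f • g) 1 μ := eLpNorm_one_eq_lintegral_enorm.symm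
    _ ≤ eLpNorm f 2 μ * eLpNorm g 2 μ := eLpNorm_smul_le_mul_eLpNorm hg hf

theorem MemLp.eLpNorm_two_sq_eq_ofReal_integral_mul_self {f : α → ℝ}
    (hf : MemLp f 2 μ) : eLpNorm f 2 μ ^ 2 = ENNReal.ofReal (∫ x, f x * f x ∂μ) := by
  have hsq := eLpNorm_nnreal_pow_eq_lintegral (f := f) (μ := μ) (p := 2) two_ne_zero
  simp only [NNReal.coe_ofNat, ENNReal.coe_ofNat, ENNReal.rpow_two] at hsq
  have hint : Integrable (fun x => f x * f x) μ := hf.integrable_mul hf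
  rw [hsq, ofReal_integral_eq_lintegral_ofReal hint (.of_forall fun x => mul_self_nonneg (f x))]
  congr 1 with x
  rw [Real.enorm_eq_ofReal_abs, ← ENNReal.ofReal_pow (abs_nonneg _), sq_abs, sq]

end MeasureTheory

namespace SchwartzMap

section Commute

variable {E F : Type*} [NormedAddCommGroup E] [NormedSpace ℝ E]
  [NormedAddCommGroup F] [NormedSpace ℝ F]

theorem lineDerivOp_comm (f : 𝓢(E, F)) (v w : E) : ∂_{v} (∂_{w} f) = ∂_{w} (∂_{v} f) := by
  ext x
  have hsymm : IsSymmSndFDerivAt ℝ f x :=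
    (f.smooth 2).contDiffAt.isSymmSndFDerivAt (by simp)
  have hsnd : ∀ v w, (∂_{v} (∂_{w} f) : 𝓢(E, F)) x = fderiv ℝ (fderiv ℝ f) x v w := fun v w => by
    change fderiv ℝ (fun y => fderiv ℝ f y w) x v = _
    rw [fderiv_clm_apply _ (differentiableAt_const w)]
    · simp
    · exact ((f.smooth 2).fderiv_right le_rfl).differentiable one_ne_zero x
  rw [hsnd, hsnd, hsymm.eq]

theorem iterate_lineDerivOp_comm (f : 𝓢(E, F)) (v w : E) (a b : ℕ) :
    (∂_{v})^[a] ((∂_{w})^[b] f) = (∂_{w})^[b] ((∂_{v})^[a] f) :=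
  ((show Function.Commute (∂_{v} : 𝓢(E, F) → 𝓢(E, F)) (∂_{w}) from
    fun f => lineDerivOp_comm f v w).iterate_iterate a b).eq f

end Commute

section IntegrationByParts

variable {D : Type*} [NormedAddCommGroup D] [NormedSpace ℝ D] [MeasurableSpace D] [BorelSpace D]
  [FiniteDimensional ℝ D] {μ : Measure D} [μ.IsAddHaarMeasure]

theorem integral_iterate_lineDerivOp_mul {𝕜 : Type*} [NormedRing 𝕜] [NormedSpace ℝ 𝕜]
    [IsScalarTower ℝ 𝕜 𝕜] [SMulCommClass ℝ 𝕜 𝕜] (f g : 𝓢(D, 𝕜)) (v : D) (k : ℕ) :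
    ∫ x, (∂_{v})^[k] f x * g x ∂μ = (-1) ^ k * ∫ x, f x * (∂_{v})^[k] g x ∂μ := by
  induction k generalizing f with
  | zero => simp
  | succ k ih =>
    rw [Function.iterate_succ_apply, ih, Function.iterate_succ_apply',
      integral_mul_lineDerivOp_right_eq_neg_left, pow_succ, mul_neg_one, neg_mul_neg]

theorem integral_mul_self_iterate_lineDerivOp {𝕜 : Type*} [NormedCommRing 𝕜] [NormedAlgebra ℝ 𝕜]
    (u : 𝓢(D, 𝕜)) (v w : D) (m n : ℕ) :
    ∫ x, (∂_{v})^[m] ((∂_{w})^[n] u) x * (∂_{v})^[m] ((∂_{w})^[n] u) x ∂μ =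
      (-1) ^ (m + n) * ∫ x, (∂_{v})^[2 * m] u x * (∂_{w})^[2 * n] u x ∂μ := by
  calc ∫ x, (∂_{v})^[m] ((∂_{w})^[n] u) x * (∂_{v})^[m] ((∂_{w})^[n] u) x ∂μ
      = (-1) ^ m * ∫ x, (∂_{w})^[n] u x * (∂_{v})^[m + m] ((∂_{w})^[n] u) x ∂μ := by
        rw [integral_iterate_lineDerivOp_mul, Function.iterate_add_apply]
    _ = (-1) ^ m * ∫ x, (∂_{w})^[n] ((∂_{v})^[2 * m] u) x * (∂_{w})^[n] u x ∂μ := by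
        simp_rw [← two_mul, iterate_lineDerivOp_comm, mul_comm]
    _ = (-1) ^ (m + n) * ∫ x, (∂_{v})^[2 * m] u x * (∂_{w})^[2 * n] u x ∂μ := by
        rw [integral_iterate_lineDerivOp_mul, ← Function.iterate_add_apply, ← two_mul, pow_add,
          mul_assoc]

end IntegrationByParts

end SchwartzMap

theorem px2_coe (f : 𝓢(ℝ × ℝ, ℝ)) : px2 f = ∂_{((1 : ℝ), (0 : ℝ))} f := by
  funext p
  exact ((f.hasFDerivAt p).comp_hasDerivAt p.1
    ((hasDerivAt_id _).prodMk (hasDerivAt_const _ p.2))).deriv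

theorem py2_coe (f : 𝓢(ℝ × ℝ, ℝ)) : py2 f = ∂_{((0 : ℝ), (1 : ℝ))} f := by
  funext p
  exact ((f.hasFDerivAt p).comp_hasDerivAt p.2
    ((hasDerivAt_const _ p.1).prodMk (hasDerivAt_id _))).deriv

theorem iterate_px2_coe (k : ℕ) (f : 𝓢(ℝ × ℝ, ℝ)) :
    px2^[k] f = (∂_{((1 : ℝ), (0 : ℝ))})^[k] f :=
  (Function.Semiconj.iterate_right (f := fun g : 𝓢(ℝ × ℝ, ℝ) => ⇑g)
    (fun g => (px2_coe g).symm) k f).symm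

theorem iterate_py2_coe (k : ℕ) (f : 𝓢(ℝ × ℝ, ℝ)) :
    py2^[k] f = (∂_{((0 : ℝ), (1 : ℝ))})^[k] f :=
  (Function.Semiconj.iterate_right (f := fun g : 𝓢(ℝ × ℝ, ℝ) => ⇑g)
    (fun g => (py2_coe g).symm) k f).symm

/-- Interpolation: `‖∂_x^m ∂_y^n u‖_{L²} ≤ ‖∂_x^{2m} u‖_{L²}^{1/2} ‖∂_y^{2n} u‖_{L²}^{1/2}`. -/
theorem mixed_derivative_interpolation (u : SchwartzMap (ℝ × ℝ) ℝ) (m n : ℕ) :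
    eLpNorm (px2^[m] (py2^[n] (⇑u))) 2 volume
      ≤ (eLpNorm (px2^[2 * m] (⇑u)) 2 volume) ^ ((1 : ℝ) / 2)
        * (eLpNorm (py2^[2 * n] (⇑u)) 2 volume) ^ ((1 : ℝ) / 2) := by
  rw [iterate_py2_coe, iterate_px2_coe, iterate_px2_coe, iterate_py2_coe]
  apply ENNReal.le_rpow_half_mul_rpow_half_of_sq_le
  rw [(SchwartzMap.memLp _ 2 volume).eLpNorm_two_sq_eq_ofReal_integral_mul_self,
    SchwartzMap.integral_mul_self_iterate_lineDerivOp]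
  refine (Real.ofReal_le_enorm _).trans ?_
  rw [enorm_mul, enorm_pow, enorm_neg, enorm_one, one_pow, one_mul]
  exact enorm_integral_mul_le_eLpNorm_two_mul_eLpNorm_two
    (SchwartzMap.continuous _).aestronglyMeasurable (SchwartzMap.continuous _).aestronglyMeasurable
end
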